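/- Let u, v : ℝ⁴ → ℝ be smooth, with v satisfying the nonlinear covering v_t = (u_{yz}+v)v_z − u_{zz}v_y and v_x = u_{yy}v_z − (u_{yz}−v)v_y on ℝ⁴. For λ ∈ ℝ set ũ(t,x,y,z) := u(t,x,y+λx,z+λt) and ṽ(t,x,y,z) := v(t,x,y+λx,z+λt) + λ. Then ṽ satisfies the nonlinear covering for ũ: ṽ_t = (ũ_{yz}+ṽ)ṽ_z − ũ_{zz}ṽ_y and ṽ_x = ũ_{yy}ṽ_z − (ũ_{yz}−ṽ)ṽ_y. -/

import Mathlib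

/-- Partial derivative with respect to the first coordinate `t`. -/
noncomputable def pT (f : ℝ → ℝ → ℝ → ℝ → ℝ) : ℝ → ℝ → ℝ → ℝ → ℝ :=
  fun t x y z => deriv (fun s => f s x y z) t

/-- Partial derivative with respect to the second coordinate `x`. -/
noncomputable def pX (f : ℝ → ℝ → ℝ → ℝ → ℝ) : ℝ → ℝ → ℝ → ℝ → ℝ :=
  fun t x y z => deriv (fun s => f t s y z) x

/-- Partial derivative with respect to the third coordinate `y`. -/
noncomputable def pY (f : ℝ → ℝ → ℝ → ℝ → ℝ) : ℝ → ℝ → ℝ → ℝ → ℝ :=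
  fun t x y z => deriv (fun s => f t x s z) y

/-- Partial derivative with respect to the fourth coordinate `z`. -/
noncomputable def pZ (f : ℝ → ℝ → ℝ → ℝ → ℝ) : ℝ → ℝ → ℝ → ℝ → ℝ :=
  fun t x y z => deriv (fun s => f t x y s) z

/-- Smoothness of a function of four real variables. -/
def Smooth4 (f : ℝ → ℝ → ℝ → ℝ → ℝ) : Prop :=
  ContDiff ℝ (⊤ : ℕ∞) (fun p : ℝ × ℝ × ℝ × ℝ => f p.1 p.2.1 p.2.2.1 p.2.2.2)

/-- The second-heavenly-equation expression `E = u_xz - u_ty - u_yy u_zz + u_yz ^ 2`. -/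
noncomputable def heavenlyE (u : ℝ → ℝ → ℝ → ℝ → ℝ) : ℝ → ℝ → ℝ → ℝ → ℝ :=
  fun t x y z =>
    pX (pZ u) t x y z - pT (pY u) t x y z
      - pY (pY u) t x y z * pZ (pZ u) t x y z + (pY (pZ u) t x y z) ^ 2

/-- `u` solves Plebański's second heavenly equation. -/
def IsHeavenly (u : ℝ → ℝ → ℝ → ℝ → ℝ) : Prop :=
  ∀ t x y z : ℝ,
    pX (pZ u) t x y z =
      pT (pY u) t x y z + pY (pY u) t x y z * pZ (pZ u) t x y z - (pY (pZ u) t x y z) ^ 2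

/-- The Galilean transform `f(t,x,y,z) ↦ f(t,x,y+λx,z+λt)` generated by `X = x∂_y + t∂_z`. -/
noncomputable def gal (lam : ℝ) (f : ℝ → ℝ → ℝ → ℝ → ℝ) : ℝ → ℝ → ℝ → ℝ → ℝ :=
  fun t x y z => f t x (y + lam * x) (z + lam * t)

lemma deriv_comp4 (f : ℝ → ℝ → ℝ → ℝ → ℝ) (hf : Smooth4 f)
    {c : ℝ → ℝ × ℝ × ℝ × ℝ} {c' : ℝ × ℝ × ℝ × ℝ} {t : ℝ}
    (hc : HasDerivAt c c' t) :
    deriv (fun s => f (c s).1 (c s).2.1 (c s).2.2.1 (c s).2.2.2) t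
      = fderiv ℝ (fun p : ℝ×ℝ×ℝ×ℝ => f p.1 p.2.1 p.2.2.1 p.2.2.2) (c t) c' := by
  have hF := ((hf.differentiable (by simp)) (c t)).hasFDerivAt
  exact (hF.comp_hasDerivAt t hc).deriv

lemma fderiv_pT (f : ℝ → ℝ → ℝ → ℝ → ℝ) (hf : Smooth4 f) (t x y z : ℝ) :
    pT f t x y z
      = fderiv ℝ (fun p : ℝ×ℝ×ℝ×ℝ => f p.1 p.2.1 p.2.2.1 p.2.2.2) (t,x,y,z) (1,0,0,0) := by
  have hc : HasDerivAt (fun s : ℝ => ((s, x, y, z) : ℝ×ℝ×ℝ×ℝ)) (1,0,0,0) t :=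
    (hasDerivAt_id t).prodMk ((hasDerivAt_const t x).prodMk
      ((hasDerivAt_const t y).prodMk (hasDerivAt_const t z)))
  exact deriv_comp4 f hf hc

lemma fderiv_pX (f : ℝ → ℝ → ℝ → ℝ → ℝ) (hf : Smooth4 f) (t x y z : ℝ) :
    pX f t x y z
      = fderiv ℝ (fun p : ℝ×ℝ×ℝ×ℝ => f p.1 p.2.1 p.2.2.1 p.2.2.2) (t,x,y,z) (0,1,0,0) := by
  have hc : HasDerivAt (fun s : ℝ => ((t, s, y, z) : ℝ×ℝ×ℝ×ℝ)) (0,1,0,0) x :=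
    (hasDerivAt_const x t).prodMk ((hasDerivAt_id x).prodMk
      ((hasDerivAt_const x y).prodMk (hasDerivAt_const x z)))
  exact deriv_comp4 f hf hc

lemma fderiv_pY (f : ℝ → ℝ → ℝ → ℝ → ℝ) (hf : Smooth4 f) (t x y z : ℝ) :
    pY f t x y z
      = fderiv ℝ (fun p : ℝ×ℝ×ℝ×ℝ => f p.1 p.2.1 p.2.2.1 p.2.2.2) (t,x,y,z) (0,0,1,0) := by
  have hc : HasDerivAt (fun s : ℝ => ((t, x, s, z) : ℝ×ℝ×ℝ×ℝ)) (0,0,1,0) y :=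
    (hasDerivAt_const y t).prodMk ((hasDerivAt_const y x).prodMk
      ((hasDerivAt_id y).prodMk (hasDerivAt_const y z)))
  exact deriv_comp4 f hf hc

lemma fderiv_pZ (f : ℝ → ℝ → ℝ → ℝ → ℝ) (hf : Smooth4 f) (t x y z : ℝ) :
    pZ f t x y z
      = fderiv ℝ (fun p : ℝ×ℝ×ℝ×ℝ => f p.1 p.2.1 p.2.2.1 p.2.2.2) (t,x,y,z) (0,0,0,1) := by
  have hc : HasDerivAt (fun s : ℝ => ((t, x, y, s) : ℝ×ℝ×ℝ×ℝ)) (0,0,0,1) z :=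
    (hasDerivAt_const z t).prodMk ((hasDerivAt_const z x).prodMk
      ((hasDerivAt_const z y).prodMk (hasDerivAt_id z)))
  exact deriv_comp4 f hf hc

lemma pT_gal (f : ℝ → ℝ → ℝ → ℝ → ℝ) (hf : Smooth4 f) (lam t x y z : ℝ) :
    pT (gal lam f) t x y z
      = pT f t x (y + lam*x) (z + lam*t) + lam * pZ f t x (y + lam*x) (z + lam*t) := by
  have hc : HasDerivAt (fun s : ℝ => ((s, x, y + lam*x, z + lam*s) : ℝ×ℝ×ℝ×ℝ))
      (1, 0, 0, lam) t := by
    refine (hasDerivAt_id t).prodMk ((hasDerivAt_const t x).prodMk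
      ((hasDerivAt_const t (y + lam*x)).prodMk ?_))
    simpa using ((hasDerivAt_id t).const_mul lam).const_add z
  have h := deriv_comp4 f hf hc
  have hsplit : ((1:ℝ),(0:ℝ),(0:ℝ),lam)
      = ((1:ℝ),(0:ℝ),(0:ℝ),(0:ℝ)) + lam • ((0:ℝ),(0:ℝ),(0:ℝ),(1:ℝ)) := by
    simp [Prod.ext_iff]
  rw [hsplit, map_add, map_smul] at h
  simp only [smul_eq_mul] at h
  rw [show pT (gal lam f) t x y z = deriv (fun s => f s x (y+lam*x) (z+lam*s)) t from rfl,
    h, fderiv_pT f hf, fderiv_pZ f hf]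

lemma pX_gal (f : ℝ → ℝ → ℝ → ℝ → ℝ) (hf : Smooth4 f) (lam t x y z : ℝ) :
    pX (gal lam f) t x y z
      = pX f t x (y + lam*x) (z + lam*t) + lam * pY f t x (y + lam*x) (z + lam*t) := by
  have hc : HasDerivAt (fun s : ℝ => ((t, s, y + lam*s, z + lam*t) : ℝ×ℝ×ℝ×ℝ))
      (0, 1, lam, 0) x := by
    refine (hasDerivAt_const x t).prodMk ((hasDerivAt_id x).prodMk
      (HasDerivAt.prodMk ?_ (hasDerivAt_const x (z + lam*t))))
    simpa using ((hasDerivAt_id x).const_mul lam).const_add y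
  have h := deriv_comp4 f hf hc
  have hsplit : ((0:ℝ),(1:ℝ),lam,(0:ℝ))
      = ((0:ℝ),(1:ℝ),(0:ℝ),(0:ℝ)) + lam • ((0:ℝ),(0:ℝ),(1:ℝ),(0:ℝ)) := by
    simp [Prod.ext_iff]
  rw [hsplit, map_add, map_smul] at h
  simp only [smul_eq_mul] at h
  rw [show pX (gal lam f) t x y z = deriv (fun s => f t s (y+lam*s) (z+lam*t)) x from rfl,
    h, fderiv_pX f hf, fderiv_pY f hf]

lemma pY_gal (f : ℝ → ℝ → ℝ → ℝ → ℝ) (lam t x y z : ℝ) :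
    pY (gal lam f) t x y z = pY f t x (y + lam*x) (z + lam*t) := by
  show deriv (fun s => f t x (s + lam*x) (z+lam*t)) y = _
  exact deriv_comp_add_const (fun w => f t x w (z+lam*t)) (lam*x) y

lemma pZ_gal (f : ℝ → ℝ → ℝ → ℝ → ℝ) (lam t x y z : ℝ) :
    pZ (gal lam f) t x y z = pZ f t x (y + lam*x) (z + lam*t) := by
  show deriv (fun s => f t x (y + lam*x) (s+lam*t)) z = _
  exact deriv_comp_add_const (fun w => f t x (y+lam*x) w) (lam*t) z

theorem symmetry_lifts_to_nonlinear_covering (u v : ℝ → ℝ → ℝ → ℝ → ℝ)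
    (hu : Smooth4 u) (hv : Smooth4 v)
    (h1 : ∀ t x y z : ℝ,
      pT v t x y z =
        (pY (pZ u) t x y z + v t x y z) * pZ v t x y z - pZ (pZ u) t x y z * pY v t x y z)
    (h2 : ∀ t x y z : ℝ,
      pX v t x y z =
        pY (pY u) t x y z * pZ v t x y z - (pY (pZ u) t x y z - v t x y z) * pY v t x y z)
    (lam : ℝ) :
    ∀ t x y z : ℝ,
      pT (fun t x y z => gal lam v t x y z + lam) t x y z =
        (pY (pZ (gal lam u)) t x y z + (gal lam v t x y z + lam)) *
            pZ (fun t x y z => gal lam v t x y z + lam) t x y z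
          - pZ (pZ (gal lam u)) t x y z * pY (fun t x y z => gal lam v t x y z + lam) t x y z ∧
      pX (fun t x y z => gal lam v t x y z + lam) t x y z =
        pY (pY (gal lam u)) t x y z * pZ (fun t x y z => gal lam v t x y z + lam) t x y z
          - (pY (pZ (gal lam u)) t x y z - (gal lam v t x y z + lam)) *
              pY (fun t x y z => gal lam v t x y z + lam) t x y z := by
  intro t x y z
  have hZ : pZ (gal lam u) = gal lam (pZ u) :=
    funext fun a => funext fun b => funext fun c => funext fun d => pZ_gal u lam a b c d
  have hYZ : pY (pZ (gal lam u)) t x y z = pY (pZ u) t x (y + lam*x) (z + lam*t) := by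
    rw [hZ, pY_gal]
  have hZZ : pZ (pZ (gal lam u)) t x y z = pZ (pZ u) t x (y + lam*x) (z + lam*t) := by
    rw [hZ, pZ_gal]
  have hYY : pY (pY (gal lam u)) t x y z = pY (pY u) t x (y + lam*x) (z + lam*t) := by
    have hY : pY (gal lam u) = gal lam (pY u) :=
      funext fun a => funext fun b => funext fun c => funext fun d => pY_gal u lam a b c d
    rw [hY, pY_gal]
  have hTv : pT (fun t x y z => gal lam v t x y z + lam) t x y z
      = pT v t x (y + lam*x) (z + lam*t) + lam * pZ v t x (y + lam*x) (z + lam*t) := by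
    have : pT (fun t x y z => gal lam v t x y z + lam) t x y z = pT (gal lam v) t x y z := by
      simp only [pT, deriv_add_const]
    rw [this, pT_gal v hv]
  have hXv : pX (fun t x y z => gal lam v t x y z + lam) t x y z
      = pX v t x (y + lam*x) (z + lam*t) + lam * pY v t x (y + lam*x) (z + lam*t) := by
    have : pX (fun t x y z => gal lam v t x y z + lam) t x y z = pX (gal lam v) t x y z := by
      simp only [pX, deriv_add_const]
    rw [this, pX_gal v hv]
  have hYv : pY (fun t x y z => gal lam v t x y z + lam) t x y z
      = pY v t x (y + lam*x) (z + lam*t) := by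
    have : pY (fun t x y z => gal lam v t x y z + lam) t x y z = pY (gal lam v) t x y z := by
      simp only [pY, deriv_add_const]
    rw [this, pY_gal]
  have hZv : pZ (fun t x y z => gal lam v t x y z + lam) t x y z
      = pZ v t x (y + lam*x) (z + lam*t) := by
    have : pZ (fun t x y z => gal lam v t x y z + lam) t x y z = pZ (gal lam v) t x y z := by
      simp only [pZ, deriv_add_const]
    rw [this, pZ_gal]
  have hv1 := h1 t x (y + lam*x) (z + lam*t)
  have hv2 := h2 t x (y + lam*x) (z + lam*t)
  constructor
  · rw [hTv, hYZ, hZZ, hYv, hZv, hv1]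
    show _ = (_ + (gal lam v t x y z + lam)) * _ - _
    simp only [gal]
    ring
  · rw [hXv, hYY, hYZ, hYv, hZv, hv2]
    show _ = _ - (_ - (gal lam v t x y z + lam)) * _
    simp only [gal]
    ring
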